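/- arXiv:2012.05209 — 2 statements merged into one kernel-verified Lean document; each statement's English description precedes it below -/
import Mathlib

section
/- There is no set S of measurable functions from [0,∞) to ℝ satisfying all of the following: (i) the indicator function χ_[0,1) belongs to S; (ii) for every f ∈ S, the function x ↦ x·f(x) belongs to S; (iii) for every f ∈ S that is Lebesgue integrable on [0,∞), its Walsh–Fourier transform 𝔉f belongs to S; (iv) for every f ∈ S and every g ∈ L²([0,∞)), the product f·g is Lebesgue integrable on [0,∞). -/
/-!
Let `f(x) = x · χ_[0,1)(x)`. For `y ∈ [2^m, 2^m + 1)` the kernel `ψ(x, y)` restricted to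
`x ∈ [0,1)` is the Rademacher function `(-1)^{d_{m+1}(x)}`, so `(𝔉f)(y) = -1/2^{m+2}`, and hence
`|y · (𝔉f)(y)| ≥ 1/4` on each of the disjoint unit intervals `[2^m, 2^m + 1)`. The function
`y ↦ y · (𝔉f)(y)` lies in `S`, but pairing it with the `L²` function equal to `1/(m+1)` on the
`m`-th interval gives a function whose integral dominates the harmonic series.
-/

open MeasureTheory Finset
open scoped ENNReal

/-- The `j`-th binary digit of `x` after the binary point. -/
noncomputable def binDigit (j : ℕ) (x : ℝ) : ℕ := (⌊(2:ℝ)^j * x⌋).toNat % 2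

/-- The Walsh function `w_k(x) = (-1)^{∑ k_i d_{i+1}(x)}`. -/
noncomputable def walsh (k : ℕ) (x : ℝ) : ℝ :=
  (-1 : ℝ) ^ (∑ i ∈ Finset.range (k+1), (k / 2^i % 2) * binDigit (i+1) x)

/-- The generalized Walsh kernel `ψ(x,y) = w_{⌊y⌋}(x) · w_{⌊x⌋}(y)`. -/
noncomputable def walshKernel (x y : ℝ) : ℝ := walsh (⌊y⌋).toNat x * walsh (⌊x⌋).toNat y

/-- The Walsh–Fourier transform `(𝔉f)(y) = ∫_{[0,∞)} ψ(x,y) f(x) dx`. -/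
noncomputable def walshFourier (f : ℝ → ℝ) (y : ℝ) : ℝ :=
  ∫ x in Set.Ici (0:ℝ), walshKernel x y * f x

/-- The dyadic translate `x ⊕ j = (⌊x⌋ XOR j) + (x - ⌊x⌋)`. -/
noncomputable def dyadicAdd (x : ℝ) (j : ℕ) : ℝ := ((⌊x⌋.toNat ^^^ j : ℕ) : ℝ) + (x - ⌊x⌋)

theorem walsh_zero (x : ℝ) : walsh 0 x = 1 := by
  simp [walsh]

theorem walsh_two_pow (m : ℕ) (x : ℝ) : walsh (2 ^ m) x = (-1) ^ binDigit (m + 1) x := by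
  rw [walsh, Finset.sum_eq_single_of_mem m (mem_range.2 (by grind [Nat.lt_two_pow_self]))]
  · simp
  · intro i _ hi
    rcases hi.lt_or_gt with hlt | hgt
    · rw [Nat.pow_div hlt.le two_pos, Nat.two_pow_mod_two_eq_zero.2 (by omega), zero_mul]
    · rw [Nat.div_eq_of_lt (Nat.pow_lt_pow_right one_lt_two hgt), Nat.zero_mod, zero_mul]

theorem neg_one_pow_binDigit (j : ℕ) (x : ℝ) :
    (-1 : ℝ) ^ binDigit j x = (-1) ^ ⌊2 ^ j * x⌋.toNat :=
  (neg_one_pow_eq_pow_mod_two _).symm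

theorem sum_range_neg_one_pow_mul_odd (n : ℕ) :
    ∑ k ∈ range (2 * n), (-1 : ℝ) ^ k * (2 * k + 1) = -(2 * n) := by
  induction n with
  | zero => simp
  | succ n ih =>
    rw [mul_add_one, sum_range_succ, sum_range_succ, ih, pow_succ, pow_mul]
    push_cast
    ring

theorem eqOn_neg_one_pow_floor_mul_self (k : ℕ) :
    Set.EqOn (fun t : ℝ => (-1 : ℝ) ^ ⌊t⌋.toNat * t) (fun t => (-1) ^ k * t)
      (Set.Ico k (k + 1)) := fun t ht => by
  have : ⌊t⌋ = k := Int.floor_eq_iff.2 (by exact_mod_cast ht)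
  simp only [this, Int.toNat_natCast]

theorem integral_neg_one_pow_floor_mul_self_unit (k : ℕ) :
    ∫ t in (k : ℝ)..k + 1, (-1 : ℝ) ^ ⌊t⌋.toNat * t = (-1) ^ k * (2 * k + 1) / 2 := by
  rw [intervalIntegral.integral_of_le (by linarith), ← integral_Ico_eq_integral_Ioc,
    setIntegral_congr_fun measurableSet_Ico (eqOn_neg_one_pow_floor_mul_self k),
    integral_Ico_eq_integral_Ioc, ← intervalIntegral.integral_of_le (by linarith),
    intervalIntegral.integral_const_mul, integral_id]
  ring

theorem intervalIntegrable_neg_one_pow_floor_mul_self (k : ℕ) :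
    IntervalIntegrable (fun t : ℝ => (-1 : ℝ) ^ ⌊t⌋.toNat * t) volume k (k + 1) := by
  rw [intervalIntegrable_iff_integrableOn_Ico_of_le (by linarith)]
  exact ((continuous_const.mul continuous_id).integrableOn_Icc.mono_set
    Set.Ico_subset_Icc_self).congr_fun (eqOn_neg_one_pow_floor_mul_self k).symm measurableSet_Ico

theorem integral_neg_one_pow_floor_mul_self (n : ℕ) :
    ∫ t in (0 : ℝ)..2 * n, (-1 : ℝ) ^ ⌊t⌋.toNat * t = -n := by
  have := intervalIntegral.sum_integral_adjacent_intervals (a := fun k : ℕ => (k : ℝ))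
    (n := 2 * n) fun k _ => by exact_mod_cast intervalIntegrable_neg_one_pow_floor_mul_self k
  push_cast at this
  rw [← this]
  simp_rw [integral_neg_one_pow_floor_mul_self_unit, ← sum_div, sum_range_neg_one_pow_mul_odd]
  ring

theorem integral_neg_one_pow_floor_mul_mul_self {n : ℕ} (hn : 0 < n) :
    ∫ x in (0 : ℝ)..1, (-1 : ℝ) ^ ⌊2 * n * x⌋.toNat * x = -(4 * n : ℝ)⁻¹ := by
  have hN : (2 * n : ℝ) ≠ 0 := by positivity
  have := intervalIntegral.integral_comp_mul_left
    (fun t : ℝ => (-1 : ℝ) ^ ⌊t⌋.toNat * t) hN (a := 0) (b := 1)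
  simp only [mul_zero, mul_one, integral_neg_one_pow_floor_mul_self, smul_eq_mul] at this
  simp only [mul_left_comm _ (2 * (n : ℝ)), intervalIntegral.integral_const_mul] at this
  rw [← mul_right_inj' hN, this]
  field_simp
  ring

theorem floor_toNat_eq_of_mem_Ico {n : ℕ} {y : ℝ} (hy : y ∈ Set.Ico (n : ℝ) (n + 1)) :
    ⌊y⌋.toNat = n := by
  rw [Int.floor_eq_iff.2 (by exact_mod_cast hy), Int.toNat_natCast]

theorem walshFourier_mul_indicator_Ico_of_mem {m : ℕ} {y : ℝ}
    (hy : y ∈ Set.Ico ((2 : ℝ) ^ m) (2 ^ m + 1)) :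
    walshFourier (fun x => x * (Set.Ico (0 : ℝ) 1).indicator (fun _ => 1) x) y
      = -(4 * 2 ^ m : ℝ)⁻¹ := by
  have hy : ⌊y⌋.toNat = 2 ^ m := floor_toNat_eq_of_mem_Ico (by exact_mod_cast hy)
  have hkernel : (fun x => walshKernel x y * (x * (Set.Ico (0 : ℝ) 1).indicator (fun _ => 1) x))
      = (Set.Ico (0 : ℝ) 1).indicator
          (fun x => (-1 : ℝ) ^ ⌊2 * (2 ^ m : ℕ) * x⌋.toNat * x) := by
    ext x
    by_cases hx : x ∈ Set.Ico (0 : ℝ) 1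
    · have hx0 : ⌊x⌋.toNat = 0 := floor_toNat_eq_of_mem_Ico (by simpa using hx)
      simp [hx, walshKernel, hy, hx0, walsh_zero, walsh_two_pow, neg_one_pow_binDigit, pow_succ']
    · simp [hx]
  rw [walshFourier, hkernel, setIntegral_indicator measurableSet_Ico,
    Set.inter_eq_right.2 Set.Ico_subset_Ici_self, integral_Ico_eq_integral_Ioc,
    ← intervalIntegral.integral_of_le zero_le_one,
    integral_neg_one_pow_floor_mul_mul_self (by positivity)]
  norm_cast

theorem integrableOn_mul_indicator_Ico :
    IntegrableOn (fun x => x * (Set.Ico (0 : ℝ) 1).indicator (fun _ => 1) x) (Set.Ici 0) := by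
  have : (fun x => x * (Set.Ico (0 : ℝ) 1).indicator (fun _ => 1) x)
      = (Set.Ico (0 : ℝ) 1).indicator id := by
    ext x; by_cases hx : x ∈ Set.Ico (0 : ℝ) 1 <;> simp [hx]
  rw [this, IntegrableOn, integrable_indicator_iff measurableSet_Ico]
  exact (continuous_id.integrableOn_Icc.mono_set Set.Ico_subset_Icc_self).restrict

theorem ENNReal.tsum_ofReal_inv_nat_succ : ∑' m : ℕ, ENNReal.ofReal ((m : ℝ) + 1)⁻¹ = ∞ := by
  by_contra h
  refine Real.not_summable_natCast_inv ((summable_nat_add_iff 1).1 ?_)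
  refine (ENNReal.summable_toReal h).congr fun m => ?_
  rw [ENNReal.toReal_ofReal (by positivity)]
  push_cast
  rfl

theorem summable_inv_nat_succ_sq : Summable fun m : ℕ => ((m : ℝ) + 1)⁻¹ ^ 2 := by
  refine ((summable_nat_add_iff 1).2 (Real.summable_nat_pow_inv.2 one_lt_two)).congr fun m => ?_
  push_cast
  rw [inv_pow]

section DisjointFamily

variable {α : Type*} {T : ℕ → Set α}

theorem tsum_indicator_apply_of_mem {M : Type*} [AddCommMonoid M] [TopologicalSpace M]
    (hT : Pairwise (Function.onFun Disjoint T)) (f : ℕ → α → M) {m : ℕ} {x : α} (hx : x ∈ T m) :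
    ∑' n, (T n).indicator (f n) x = f m x := by
  rw [tsum_eq_single m fun n hn => Set.indicator_of_notMem
    (Set.disjoint_left.1 (hT hn.symm) hx) _, Set.indicator_of_mem hx]

noncomputable def harmonicStep (T : ℕ → Set α) (x : α) : ℝ :=
  ∑' m, (T m).indicator (fun _ => ((m : ℝ) + 1)⁻¹) x

theorem harmonicStep_apply_of_mem (hT : Pairwise (Function.onFun Disjoint T)) {m : ℕ} {x : α}
    (hx : x ∈ T m) : harmonicStep T x = ((m : ℝ) + 1)⁻¹ := by
  rw [harmonicStep, tsum_indicator_apply_of_mem hT _ hx]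

theorem harmonicStep_apply_of_notMem {x : α} (hx : x ∉ ⋃ m, T m) : harmonicStep T x = 0 := by
  simp_all [harmonicStep]

variable [MeasurableSpace α]

theorem measurable_harmonicStep (hT : ∀ m, MeasurableSet (T m)) : Measurable (harmonicStep T) :=
  Measurable.tsum fun m => measurable_const.indicator (hT m)

theorem lintegral_eq_tsum_of_eqOn {μ : Measure α} (hT : ∀ m, MeasurableSet (T m))
    (hdisj : Pairwise (Function.onFun Disjoint T)) {F : α → ℝ≥0∞} {c : ℕ → ℝ≥0∞}
    (hF : ∀ m, ∀ x ∈ T m, F x = c m) (hF₀ : ∀ x ∉ ⋃ m, T m, F x = 0) :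
    ∫⁻ x, F x ∂μ = ∑' m, c m * μ (T m) := by
  rw [← setLIntegral_eq_of_support_subset (s := ⋃ m, T m), lintegral_iUnion hT hdisj]
  · exact tsum_congr fun m => by rw [setLIntegral_congr_fun (hT m) (hF m), setLIntegral_const]
  · intro x hx
    by_contra h
    exact hx (hF₀ x h)

theorem memLp_harmonicStep {μ : Measure α} (hT : ∀ m, MeasurableSet (T m))
    (hdisj : Pairwise (Function.onFun Disjoint T)) (hμ : ∀ m, μ (T m) ≤ 1) :
    MemLp (harmonicStep T) 2 μ := by
  have hmeas := measurable_harmonicStep hT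
  refine (memLp_two_iff_integrable_sq hmeas.aestronglyMeasurable).2
    ⟨(hmeas.pow_const 2).aestronglyMeasurable, ?_⟩
  rw [HasFiniteIntegral, lintegral_eq_tsum_of_eqOn hT hdisj
    (c := fun m => ENNReal.ofReal (((m : ℝ) + 1)⁻¹ ^ 2))]
  · calc ∑' m : ℕ, ENNReal.ofReal (((m : ℝ) + 1)⁻¹ ^ 2) * μ (T m)
        ≤ ∑' m : ℕ, ENNReal.ofReal (((m : ℝ) + 1)⁻¹ ^ 2) :=
          ENNReal.tsum_le_tsum fun m => mul_le_of_le_one_right' (hμ m)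
      _ < ∞ := summable_inv_nat_succ_sq.tsum_ofReal_lt_top
  · intro m x hx
    rw [harmonicStep_apply_of_mem hdisj hx, Real.enorm_eq_ofReal (by positivity)]
  · intro x hx
    simp [harmonicStep_apply_of_notMem hx]

theorem lintegral_enorm_harmonicStep {μ : Measure α} (hT : ∀ m, MeasurableSet (T m))
    (hdisj : Pairwise (Function.onFun Disjoint T)) (hμ : ∀ m, 1 ≤ μ (T m)) :
    ∫⁻ x, ‖harmonicStep T x‖ₑ ∂μ = ∞ := by
  rw [lintegral_eq_tsum_of_eqOn hT hdisj (c := fun m => ENNReal.ofReal ((m : ℝ) + 1)⁻¹),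
    ← top_le_iff]
  · calc ∞ = ∑' m : ℕ, ENNReal.ofReal ((m : ℝ) + 1)⁻¹ := ENNReal.tsum_ofReal_inv_nat_succ.symm
      _ ≤ _ := ENNReal.tsum_le_tsum fun m => le_mul_of_one_le_right' (hμ m)
  · intro m x hx
    rw [harmonicStep_apply_of_mem hdisj hx, Real.enorm_eq_ofReal (by positivity)]
  · intro x hx
    simp [harmonicStep_apply_of_notMem hx]

theorem not_integrable_mul_harmonicStep {μ : Measure α} (hT : ∀ m, MeasurableSet (T m))
    (hdisj : Pairwise (Function.onFun Disjoint T)) (hμ : ∀ m, 1 ≤ μ (T m)) {h : α → ℝ} {c : ℝ}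
    (hc : 0 < c) (hh : ∀ m, ∀ x ∈ T m, c ≤ |h x|) :
    ¬ Integrable (fun x => h x * harmonicStep T x) μ := by
  intro hint
  have hle : ∀ x, ENNReal.ofReal c * ‖harmonicStep T x‖ₑ ≤ ‖h x * harmonicStep T x‖ₑ := by
    intro x
    by_cases hx : x ∈ ⋃ m, T m
    · obtain ⟨m, hm⟩ := Set.mem_iUnion.1 hx
      rw [enorm_mul]
      gcongr
      rw [← Real.enorm_abs, Real.enorm_eq_ofReal (abs_nonneg _)]
      exact ENNReal.ofReal_le_ofReal (hh m x hm)
    · simp [harmonicStep_apply_of_notMem hx]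
  have htop : ∫⁻ x, ‖h x * harmonicStep T x‖ₑ ∂μ = ∞ := by
    refine top_le_iff.1 (le_trans ?_ (lintegral_mono hle))
    rw [lintegral_const_mul _ (measurable_harmonicStep hT).enorm,
      lintegral_enorm_harmonicStep hT hdisj hμ, ENNReal.mul_top (by simpa using hc)]
  exact hint.2.ne htop

theorem exists_memLp_two_not_integrable_mul {μ : Measure α} (hT : ∀ m, MeasurableSet (T m))
    (hdisj : Pairwise (Function.onFun Disjoint T)) (hμ : ∀ m, μ (T m) = 1) {h : α → ℝ} {c : ℝ}
    (hc : 0 < c) (hh : ∀ m, ∀ x ∈ T m, c ≤ |h x|) :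
    ∃ g : α → ℝ, MemLp g 2 μ ∧ ¬ Integrable (fun x => h x * g x) μ :=
  ⟨harmonicStep T, memLp_harmonicStep hT hdisj fun m => (hμ m).le,
    not_integrable_mul_harmonicStep hT hdisj (fun m => (hμ m).ge) hc hh⟩

theorem pairwise_disjoint_Ico_two_pow :
    Pairwise (Function.onFun Disjoint fun m : ℕ => Set.Ico ((2 : ℝ) ^ m) (2 ^ m + 1)) := by
  refine (pairwise_disjoint_on _).2 fun m n hmn => Set.disjoint_left.2 fun x hxm hxn => ?_
  have h1 : (1 : ℝ) ≤ 2 ^ m := one_le_pow₀ one_le_two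
  have h2 : (2 : ℝ) ^ (m + 1) ≤ 2 ^ n := pow_le_pow_right₀ one_le_two hmn
  linarith [hxm.2, hxn.1, pow_succ (2 : ℝ) m]

theorem one_div_four_le_abs_mul_walshFourier_mul_indicator_Ico {m : ℕ} {x : ℝ}
    (hx : x ∈ Set.Ico ((2 : ℝ) ^ m) (2 ^ m + 1)) :
    1 / 4 ≤ |x * walshFourier (fun x => x * (Set.Ico (0 : ℝ) 1).indicator (fun _ => 1) x) x| := by
  rw [walshFourier_mul_indicator_Ico_of_mem hx, abs_mul, abs_neg, abs_inv,
    abs_of_pos (by positivity : (0 : ℝ) < 4 * 2 ^ m),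
    abs_of_pos (lt_of_lt_of_le (by positivity) hx.1), le_mul_inv_iff₀ (by positivity)]
  linarith [hx.1]

/-- There is no space of measurable functions on the dyadic half-line containing
`χ_[0,1)`, invariant under multiplication by `x` and under the Walsh–Fourier
transform, on which every element of `L²([0,∞))` acts by the inner product. -/
theorem no_dyadic_distribution_space :
    ¬ ∃ S : Set (ℝ → ℝ),
      (∀ f ∈ S, Measurable f) ∧
      (Set.indicator (Set.Ico (0:ℝ) 1) (fun _ => (1:ℝ)) ∈ S) ∧
      (∀ f ∈ S, (fun x => x * f x) ∈ S) ∧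
      (∀ f ∈ S, IntegrableOn f (Set.Ici 0) volume → walshFourier f ∈ S) ∧
      (∀ f ∈ S, ∀ g : ℝ → ℝ, MemLp g 2 (volume.restrict (Set.Ici 0)) →
        IntegrableOn (fun x => f x * g x) (Set.Ici 0) volume) := by
  rintro ⟨S, -, hInd, hMul, hWF, hPair⟩
  have hFS := hWF _ (hMul _ hInd) integrableOn_mul_indicator_Ico
  have hvol (m : ℕ) : volume.restrict (Set.Ici 0) (Set.Ico ((2 : ℝ) ^ m) (2 ^ m + 1)) = 1 := by
    rw [Measure.restrict_apply measurableSet_Ico,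
      Set.inter_eq_left.2 (Set.Ico_subset_Ici_self.trans (Set.Ici_subset_Ici.2 (by positivity))),
      Real.volume_Ico]
    simp
  obtain ⟨g, hg, hnot⟩ := exists_memLp_two_not_integrable_mul (fun _ => measurableSet_Ico)
    pairwise_disjoint_Ico_two_pow hvol (by norm_num)
    fun _ _ => one_div_four_le_abs_mul_walshFourier_mul_indicator_Ico
  exact hnot (hPair _ (hMul _ hFS) g hg)
end DisjointFamily
end

section
/- Let m, n ∈ ℤ and let f : [0,∞) → ℝ be integrable, equal to 0 outside [0, 2^m], and constant on every dyadic interval [k·2^{−n}, (k+1)·2^{−n}), k ∈ ℕ. Then the Walsh–Fourier transform 𝔉f is equal to 0 outside [0, 2^n] and is constant on every dyadic interval [j·2^{−m}, (j+1)·2^{−m}), j ∈ ℕ. -/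
open MeasureTheory Finset

/-!
Write `δ_a(x) = ⌊2^a x⌋ mod 2` for the binary digit of `x ≥ 0` at an arbitrary position `a ∈ ℤ`
(positions `a ≤ 0` are the bits of `⌊x⌋`). Both Walsh factors combine into
`ψ(x, y) = (-1)^{∑_a δ_a(x) δ_{1-a}(y)}`.

If `x < 2^m`, then `δ_a(x) = 0` for `a ≤ -m`, so only the digits of `y` at positions `≤ m`
enter, and these are constant on dyadic intervals of rank `m`; the part `x > 2^m` is killed by
the support of `f`.

If `2^j ≤ y < 2^(j+1)` with `j ≥ n`, then `δ_{-j}(y) = 1`. Translating by `2^(-(j+1))` maps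
`{x ≥ 0 : δ_{j+1}(x) = 0}` onto its complement in `[0, ∞)`, changes exactly the digit
`δ_{j+1}(x)` of `x`, and causes no carry into positions `≤ n`; so it flips the sign of
`ψ(·, y)` while preserving `f`, and the integral cancels.
-/

noncomputable def dyadicDigit (a : ℤ) (x : ℝ) : ℕ := ⌊(2:ℝ) ^ a * x⌋₊ % 2

lemma natFloor_zpow_mul_eq_div (b : ℤ) (k : ℕ) (t : ℝ) :
    ⌊(2:ℝ) ^ b * t⌋₊ = ⌊(2:ℝ) ^ (b + k) * t⌋₊ / 2 ^ k := by
  rw [← Nat.floor_div_natCast, zpow_add₀ two_ne_zero, zpow_natCast]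
  push_cast
  field_simp

lemma natFloor_zpow_mul_add_zpow_neg {x : ℝ} (hx : 0 ≤ x) (a : ℤ) (k : ℕ) :
    ⌊(2:ℝ) ^ (a + k) * (x + 2 ^ (-a))⌋₊ = ⌊(2:ℝ) ^ (a + k) * x⌋₊ + 2 ^ k := by
  rw [← Nat.floor_add_natCast (by positivity), mul_add, ← zpow_add₀ two_ne_zero]
  norm_num

lemma natFloor_zpow_mul_add_zpow_neg_self {x : ℝ} (hx : 0 ≤ x) (a : ℤ) :
    ⌊(2:ℝ) ^ a * (x + 2 ^ (-a))⌋₊ = ⌊(2:ℝ) ^ a * x⌋₊ + 1 := by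
  simpa using natFloor_zpow_mul_add_zpow_neg hx a 0

lemma natFloor_zpow_mul_add_zpow_neg_of_lt {x : ℝ} (hx : 0 ≤ x) {a c : ℤ}
    (hxa : dyadicDigit a x = 0) (hc : c < a) :
    ⌊(2:ℝ) ^ c * (x + 2 ^ (-a))⌋₊ = ⌊(2:ℝ) ^ c * x⌋₊ := by
  obtain ⟨k, rfl⟩ : ∃ k : ℕ, a = c + (k + 1 : ℕ) := ⟨(a - c - 1).toNat, by omega⟩
  rw [natFloor_zpow_mul_eq_div c (k + 1), natFloor_zpow_mul_eq_div c (k + 1) x,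
    natFloor_zpow_mul_add_zpow_neg_self hx]
  refine Nat.succ_div_of_not_dvd fun hdvd => ?_
  have := (dvd_pow_self 2 k.succ_ne_zero).trans hdvd
  unfold dyadicDigit at hxa
  omega

lemma dyadicDigit_add_zpow_neg_self {x : ℝ} (hx : 0 ≤ x) (a : ℤ) :
    dyadicDigit a (x + 2 ^ (-a)) = (dyadicDigit a x + 1) % 2 := by
  rw [dyadicDigit, dyadicDigit, natFloor_zpow_mul_add_zpow_neg_self hx, Nat.mod_add_mod]

lemma dyadicDigit_add_zpow_neg_of_ne {x : ℝ} (hx : 0 ≤ x) {a c : ℤ} (hxa : dyadicDigit a x = 0)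
    (hc : c ≠ a) : dyadicDigit c (x + 2 ^ (-a)) = dyadicDigit c x := by
  unfold dyadicDigit
  rcases hc.lt_or_gt with hc | hc
  · rw [natFloor_zpow_mul_add_zpow_neg_of_lt hx hxa hc]
  · obtain ⟨k, rfl⟩ : ∃ k : ℕ, c = a + (k + 1 : ℕ) := ⟨(c - a - 1).toNat, by omega⟩
    rw [natFloor_zpow_mul_add_zpow_neg hx, Nat.add_mod, pow_succ, Nat.mul_mod_left, add_zero,
      Nat.mod_mod]

lemma dyadicDigit_eq_zero_of_lt_one {a : ℤ} {x : ℝ} (h : (2:ℝ) ^ a * x < 1) :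
    dyadicDigit a x = 0 := by
  rw [dyadicDigit, Nat.floor_eq_zero.mpr h]

lemma dyadicDigit_neg_natCast (i : ℕ) (x : ℝ) : dyadicDigit (-i) x = ⌊x⌋₊ / 2 ^ i % 2 := by
  rw [dyadicDigit, natFloor_zpow_mul_eq_div (-i) i, neg_add_cancel, zpow_zero, one_mul]

lemma binDigit_eq_dyadicDigit (j : ℕ) (x : ℝ) : binDigit j x = dyadicDigit j x := by
  rw [binDigit, dyadicDigit, Int.floor_toNat, zpow_natCast]

lemma dyadicDigit_eq_of_natFloor_eq {m b : ℤ} (hb : b ≤ m) {y y' : ℝ}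
    (h : ⌊(2:ℝ) ^ m * y⌋₊ = ⌊(2:ℝ) ^ m * y'⌋₊) : dyadicDigit b y = dyadicDigit b y' := by
  obtain ⟨k, rfl⟩ : ∃ k : ℕ, m = b + k := ⟨(m - b).toNat, by omega⟩
  rw [dyadicDigit, dyadicDigit, natFloor_zpow_mul_eq_div b k, natFloor_zpow_mul_eq_div b k y', h]

lemma dyadicDigit_neg_eq_one {j : ℤ} {y : ℝ} (hy : y ∈ Set.Ico ((2:ℝ) ^ j) (2 ^ (j + 1))) :
    dyadicDigit (-j) y = 1 := by
  have h2 : (0:ℝ) < 2 ^ (-j) := by positivity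
  have hlow : (2:ℝ) ^ (-j) * 2 ^ j = 1 := by rw [← zpow_add₀ two_ne_zero]; simp
  have hhigh : (2:ℝ) ^ (-j) * 2 ^ (j + 1) = 1 + 1 := by rw [← zpow_add₀ two_ne_zero]; norm_num
  have hfloor : ⌊(2:ℝ) ^ (-j) * y⌋₊ = 1 := by
    have hy0 : 0 ≤ y := (zpow_pos two_pos j).le.trans hy.1
    rw [Nat.floor_eq_iff (by positivity), Nat.cast_one]
    constructor
    · exact hlow ▸ mul_le_mul_of_nonneg_left hy.1 h2.le
    · exact hhigh ▸ mul_lt_mul_of_pos_left hy.2 h2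
  rw [dyadicDigit, hfloor]

lemma walsh_eq_neg_one_pow_sum_range {k N : ℕ} (hk : k < N) (x : ℝ) :
    walsh k x = (-1) ^ (∑ i ∈ range N, k / 2 ^ i % 2 * binDigit (i + 1) x) := by
  refine congrArg _ (sum_subset (range_subset_range.mpr (by omega)) fun i hiN hik => ?_)
  rw [mem_range, not_lt] at hik
  rw [Nat.div_eq_of_lt ((Nat.lt_two_pow_self).trans_le (Nat.pow_le_pow_right two_pos (by omega))),
    Nat.zero_mod, zero_mul]

lemma sum_Ioc_neg_eq_sum_range {M : Type*} [AddCommMonoid M] (g : ℤ → M) (N : ℕ) :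
    ∑ a ∈ Ioc (-(N:ℤ)) N, g a = ∑ i ∈ range N, (g (i + 1) + g (-i)) := by
  induction N with
  | zero => simp
  | succ N ih =>
    have hIoc : Ioc (-((N + 1 : ℕ) : ℤ)) (N + 1 : ℕ) = insert ((N:ℤ) + 1) (insert (-(N:ℤ))
        (Ioc (-(N:ℤ)) N)) := by
      ext a; simp only [mem_Ioc, mem_insert]; omega
    rw [hIoc, sum_insert (by simp), sum_insert (by simp), ih, sum_range_succ]
    abel

lemma walshKernel_eq_neg_one_pow_sum {x y : ℝ} {N : ℕ} (hx : ⌊x⌋₊ < N) (hy : ⌊y⌋₊ < N) :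
    walshKernel x y = (-1) ^ (∑ a ∈ Ioc (-(N:ℤ)) N, dyadicDigit a x * dyadicDigit (1 - a) y) := by
  rw [walshKernel, Int.floor_toNat, Int.floor_toNat, walsh_eq_neg_one_pow_sum_range hy,
    walsh_eq_neg_one_pow_sum_range hx, ← pow_add, ← sum_add_distrib, sum_Ioc_neg_eq_sum_range]
  refine congrArg _ (sum_congr rfl fun i _ => ?_)
  rw [binDigit_eq_dyadicDigit, binDigit_eq_dyadicDigit, ← dyadicDigit_neg_natCast,
    ← dyadicDigit_neg_natCast, show (1:ℤ) - (i + 1) = -i by ring, sub_neg_eq_add, add_comm 1]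
  push_cast
  ring

lemma walshKernel_eq_of_natFloor_eq {m : ℤ} {x y y' : ℝ} (hx : x < 2 ^ m)
    (hy : ⌊(2:ℝ) ^ m * y⌋₊ = ⌊(2:ℝ) ^ m * y'⌋₊) : walshKernel x y = walshKernel x y' := by
  set N := ⌊x⌋₊ + ⌊y⌋₊ + ⌊y'⌋₊ + 1
  rw [walshKernel_eq_neg_one_pow_sum (N := N) (by omega) (by omega),
    walshKernel_eq_neg_one_pow_sum (N := N) (by omega) (by omega)]
  refine congrArg _ (sum_congr rfl fun a _ => ?_)
  by_cases ha : 1 - a ≤ m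
  · rw [dyadicDigit_eq_of_natFloor_eq ha hy]
  · suffices dyadicDigit a x = 0 by rw [this, zero_mul, zero_mul]
    apply dyadicDigit_eq_zero_of_lt_one
    calc (2:ℝ) ^ a * x < 2 ^ a * 2 ^ m := mul_lt_mul_of_pos_left hx (by positivity)
      _ = 2 ^ (a + m) := (zpow_add₀ two_ne_zero a m).symm
      _ ≤ 1 := zpow_le_one_of_nonpos₀ one_le_two (by omega)

lemma walshKernel_add_zpow_neg {x y : ℝ} (hx : 0 ≤ x) {a : ℤ} (hxa : dyadicDigit a x = 0)
    (hya : dyadicDigit (1 - a) y = 1) : walshKernel (x + 2 ^ (-a)) y = -walshKernel x y := by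
  have hfloor : ⌊x⌋₊ ≤ ⌊x + 2 ^ (-a)⌋₊ := Nat.floor_le_floor (by simp [zpow_nonneg])
  set N := ⌊x + 2 ^ (-a)⌋₊ + ⌊y⌋₊ + a.natAbs + 1
  have ha : a ∈ Ioc (-(N:ℤ)) N := by simp only [mem_Ioc]; omega
  rw [walshKernel_eq_neg_one_pow_sum (N := N) (by omega) (by omega),
    walshKernel_eq_neg_one_pow_sum (N := N) (by omega) (by omega), ← add_sum_erase _ _ ha,
    ← add_sum_erase _ _ ha, dyadicDigit_add_zpow_neg_self hx, hxa, hya,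
    sum_congr rfl fun c hc => by rw [dyadicDigit_add_zpow_neg_of_ne hx hxa (ne_of_mem_erase hc)]]
  simp [pow_add]

lemma measurable_binDigit (j : ℕ) : Measurable (binDigit j) :=
  measurable_from_top.comp (g := fun q : ℤ => q.toNat % 2)
    (measurable_const.mul measurable_id).floor

lemma measurable_walsh (k : ℕ) : Measurable (walsh k) :=
  measurable_const.pow <|
    Finset.measurable_sum _ fun i _ => (measurable_binDigit (i + 1)).const_mul _

lemma measurable_walshKernel_left (y : ℝ) : Measurable fun x => walshKernel x y :=
  (measurable_walsh _).mul <|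
    measurable_from_top.comp (g := fun q : ℤ => walsh q.toNat y) measurable_id.floor

lemma norm_walshKernel_le (x y : ℝ) : ‖walshKernel x y‖ ≤ 1 := by
  simp [walshKernel, walsh]

lemma MeasureTheory.IntegrableOn.walshKernel_mul {f : ℝ → ℝ} {s : Set ℝ} (hf : IntegrableOn f s)
    (y : ℝ) : IntegrableOn (fun x => walshKernel x y * f x) s :=
  hf.bdd_mul (measurable_walshKernel_left y).aestronglyMeasurable
    (.of_forall fun x => norm_walshKernel_le x y)

lemma setIntegral_eq_zero_of_add_eq_neg {G E : Type*} [MeasurableSpace G] [AddGroup G]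
    [MeasurableAdd G] [NormedAddCommGroup E] [NormedSpace ℝ E] {μ : Measure G}
    [μ.IsAddRightInvariant] {g : G → E} {s t : Set G} (hs : MeasurableSet s)
    (ht : MeasurableSet t) {c : G}
    (hst : (· + c) ⁻¹' (s \ t) = s ∩ t) (hg : ∀ x ∈ s ∩ t, g (x + c) = -g x)
    (hint : IntegrableOn g s μ) : ∫ x in s, g x ∂μ = 0 := by
  have htranslate : ∫ x in s \ t, g x ∂μ = -∫ x in s ∩ t, g x ∂μ :=
    calc ∫ x in s \ t, g x ∂μ = ∫ x, (s \ t).indicator g (x + c) ∂μ := by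
          rw [integral_add_right_eq_self (fun x => (s \ t).indicator g x) c,
            integral_indicator (hs.diff ht)]
      _ = ∫ x in s ∩ t, g (x + c) ∂μ := by
          rw [← integral_indicator (hs.inter ht), ← hst]
          simp_rw [← Set.indicator_comp_right (· + c)]
          rfl
      _ = -∫ x in s ∩ t, g x ∂μ := by
          rw [setIntegral_congr_fun (hs.inter ht) hg, integral_neg]
  rw [← integral_inter_add_sdiff ht hint, htranslate, add_neg_cancel]

lemma setIntegral_Ici_eq_zero_of_add_zpow_neg_eq_neg {E : Type*} [NormedAddCommGroup E]
    [NormedSpace ℝ E] {g : ℝ → E} (a : ℤ) (hint : IntegrableOn g (Set.Ici 0))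
    (hg : ∀ x, 0 ≤ x → dyadicDigit a x = 0 → g (x + 2 ^ (-a)) = -g x) :
    ∫ x in Set.Ici 0, g x = 0 := by
  have hmeas : MeasurableSet {x : ℝ | dyadicDigit a x = 0} :=
    measurable_from_top.comp (g := fun q : ℕ => q % 2)
      (measurable_const.mul measurable_id).nat_floor
      (measurableSet_singleton 0)
  refine setIntegral_eq_zero_of_add_eq_neg measurableSet_Ici hmeas ?_
    (fun x hx => hg x hx.1 hx.2) hint
  ext x
  simp only [Set.mem_preimage, Set.mem_sdiff, Set.mem_inter_iff, Set.mem_Ici, Set.mem_ofPred_eq]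
  constructor
  · rintro ⟨hx, hodd⟩
    have hx0 : 0 ≤ x := by
      by_contra hneg
      refine hodd (dyadicDigit_eq_zero_of_lt_one ?_)
      rw [mul_add, ← zpow_add₀ two_ne_zero, add_neg_cancel, zpow_zero]
      have : (2:ℝ) ^ a * x < 0 := mul_neg_of_pos_of_neg (by positivity) (by linarith)
      linarith
    rw [dyadicDigit_add_zpow_neg_self hx0] at hodd
    exact ⟨hx0, by simp only [dyadicDigit] at hodd ⊢; omega⟩
  · rintro ⟨hx, heven⟩
    exact ⟨by positivity, by rw [dyadicDigit_add_zpow_neg_self hx, heven]; simp⟩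

lemma mem_Ico_dyadic_iff {n : ℤ} {k : ℕ} {t : ℝ} (ht : 0 ≤ t) :
    t ∈ Set.Ico ((k:ℝ) * 2 ^ (-n)) (((k:ℝ) + 1) * 2 ^ (-n)) ↔ ⌊(2:ℝ) ^ n * t⌋₊ = k := by
  rw [Nat.floor_eq_iff (by positivity), Set.mem_Ico, zpow_neg, ← div_eq_mul_inv, ← div_eq_mul_inv,
    div_le_iff₀' (by positivity), lt_div_iff₀' (by positivity)]

lemma add_zpow_neg_mem_Ico_dyadic {n a : ℤ} (hna : n < a) {x : ℝ} (hx : 0 ≤ x)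
    (hxa : dyadicDigit a x = 0) :
    x + 2 ^ (-a) ∈
      Set.Ico ((⌊(2:ℝ) ^ n * x⌋₊ : ℝ) * 2 ^ (-n)) ((⌊(2:ℝ) ^ n * x⌋₊ + 1) * 2 ^ (-n)) :=
  (mem_Ico_dyadic_iff (by positivity)).2 (natFloor_zpow_mul_add_zpow_neg_of_lt hx hxa hna)

/-- If an integrable `f` vanishes outside `[0, 2^m]` and is constant on every dyadic
interval of rank `n`, then `𝔉f` vanishes outside `[0, 2^n]` and is constant on every
dyadic interval of rank `m`. -/
theorem walshFourier_support_rank (m n : ℤ) (f : ℝ → ℝ)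
    (hint : IntegrableOn f (Set.Ici 0) volume)
    (hsupp : ∀ x : ℝ, 0 ≤ x → (2:ℝ)^m < x → f x = 0)
    (hconst : ∀ k : ℕ, ∀ x ∈ Set.Ico ((k:ℝ) * 2^(-n)) (((k:ℝ)+1) * 2^(-n)),
      ∀ x' ∈ Set.Ico ((k:ℝ) * 2^(-n)) (((k:ℝ)+1) * 2^(-n)), f x = f x') :
    (∀ y : ℝ, 0 ≤ y → (2:ℝ)^n < y → walshFourier f y = 0) ∧
    (∀ j : ℕ, ∀ y ∈ Set.Ico ((j:ℝ) * 2^(-m)) (((j:ℝ)+1) * 2^(-m)),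
      ∀ y' ∈ Set.Ico ((j:ℝ) * 2^(-m)) (((j:ℝ)+1) * 2^(-m)),
        walshFourier f y = walshFourier f y') := by
  refine ⟨fun y _ hyn => ?_, fun j y hy y' hy' => ?_⟩
  · obtain ⟨j, hj⟩ := exists_mem_Ico_zpow ((zpow_pos two_pos n).trans hyn) one_lt_two
    have hnj : n < j + 1 := (zpow_lt_zpow_iff_right₀ one_lt_two).mp (hyn.trans hj.2)
    have hyj : dyadicDigit (1 - (j + 1)) y = 1 := by
      rw [show 1 - (j + 1) = -j by ring]; exact dyadicDigit_neg_eq_one hj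
    refine setIntegral_Ici_eq_zero_of_add_zpow_neg_eq_neg (j + 1) (hint.walshKernel_mul y)
      fun x hx hxa => ?_
    rw [walshKernel_add_zpow_neg hx hxa hyj, neg_mul,
      hconst _ _ (add_zpow_neg_mem_Ico_dyadic hnj hx hxa) _ ((mem_Ico_dyadic_iff hx).2 rfl)]
  · have hfloor : ⌊(2:ℝ) ^ m * y⌋₊ = ⌊(2:ℝ) ^ m * y'⌋₊ := by
      rw [(mem_Ico_dyadic_iff ((by positivity : (0:ℝ) ≤ j * 2 ^ (-m)).trans hy.1)).1 hy,
        (mem_Ico_dyadic_iff ((by positivity : (0:ℝ) ≤ j * 2 ^ (-m)).trans hy'.1)).1 hy']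
    refine setIntegral_congr_ae measurableSet_Ici ?_
    filter_upwards [volume.ae_ne ((2:ℝ) ^ m)] with x hxm hx
    rcases hxm.lt_or_gt with hxm | hxm
    · rw [walshKernel_eq_of_natFloor_eq hxm hfloor]
    · rw [hsupp x hx hxm, mul_zero, mul_zero]
end
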